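/- Let G_1, …, G_N be finite simple graphs on Fin n, let P be an entrywise positive row-stochastic N×N matrix, let π ∈ ℝ^N be a stationary distribution of P (π entrywise positive, Σ_j π_j = 1, and Σ_i π_i p_{ij} = π_j for all j), and let s > 0. Then the expected correlation matrix m₂(k) := Σ_{σ : {0,…,k−1} → {1,…,N}} w(σ)·x_σ(k) x_σ(k)ᵀ ∈ ℝ^{n×n} converges entrywise, as k → ∞, to a limit Q ∈ ℝ^{n×n} which is symmetric and positive semidefinite. -/

import Mathlib

open Matrix Filter Topology

/-- `J(G)` : the matrix with entries `A(G)_{ij} / (d_G(i) + 1)`. -/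
noncomputable def Jmat {n : ℕ} (G : SimpleGraph (Fin n)) [DecidableRel G.Adj] :
    Matrix (Fin n) (Fin n) ℝ :=
  Matrix.of fun i j => (if G.Adj i j then 1 else 0) / ((G.degree i : ℝ) + 1)

/-- The DSSD trajectory along a graph sequence `σ`:
`x_σ(0) = 0`, `x_σ(t+1) = J(G_{σ(t)}) x_σ(t) + (s/(d_{G_{σ(t)}}(0)+1)) e_0`. -/
noncomputable def traj {N n : ℕ} [NeZero n] (Gs : Fin N → SimpleGraph (Fin n))
    [∀ i, DecidableRel (Gs i).Adj] (s : ℝ) (σ : ℕ → Fin N) : ℕ → Fin n → ℝ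
  | 0 => 0
  | (t + 1) => fun u =>
      (Jmat (Gs (σ t))).mulVec (traj Gs s σ t) u +
        (if u = 0 then s / (((Gs (σ t)).degree 0 : ℝ) + 1) else 0)

/-- The probability weight of the length-`k` graph sequence `σ`:
`w(σ) = π_{σ(0)} · ∏_{t=0}^{k-2} p_{σ(t) σ(t+1)}`. -/
noncomputable def weight {N : ℕ} (P : Matrix (Fin N) (Fin N) ℝ) (pi : Fin N → ℝ)
    (k : ℕ) (σ : ℕ → Fin N) : ℝ :=
  pi (σ 0) * ∏ t ∈ Finset.range (k - 1), P (σ t) (σ (t + 1))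

/-- Extension of a finite sequence `σ : Fin k → Fin N` to all of `ℕ`
(the values beyond `k` are irrelevant). -/
def extFun {N : ℕ} [NeZero N] {k : ℕ} (σ : Fin k → Fin N) : ℕ → Fin N :=
  fun t => if h : t < k then σ ⟨t, h⟩ else 0

/-- The expected correlation matrix
`m₂(k) := ∑_{σ : {0,…,k−1} → {1,…,N}} w(σ) · x_σ(k) x_σ(k)ᵀ`. -/
noncomputable def expCorr {N n : ℕ} [NeZero N] [NeZero n]
    (Gs : Fin N → SimpleGraph (Fin n)) [∀ i, DecidableRel (Gs i).Adj]
    (P : Matrix (Fin N) (Fin N) ℝ) (pi : Fin N → ℝ) (s : ℝ) (k : ℕ) :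
    Matrix (Fin n) (Fin n) ℝ :=
  ∑ σ : Fin k → Fin N,
    weight P pi k (extFun σ) •
      Matrix.vecMulVec (traj Gs s (extFun σ) k) (traj Gs s (extFun σ) k)

lemma Jmat_nonneg {n : ℕ} (G : SimpleGraph (Fin n)) [DecidableRel G.Adj] (i j : Fin n) :
    0 ≤ Jmat G i j := by
  unfold Jmat
  simp only [Matrix.of_apply]
  apply div_nonneg
  · positivity
  · positivity

lemma Jmat_row_sum {n : ℕ} [NeZero n] (G : SimpleGraph (Fin n)) [DecidableRel G.Adj] (i : Fin n) :
    ∑ j, Jmat G i j ≤ 1 - 1 / (n : ℝ) := by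
  have hd : (G.degree i : ℝ) + 1 ≤ n := by
    have := G.degree_lt_card_verts i
    have : G.degree i < n := by simpa using this
    exact_mod_cast this
  have hsum : ∑ j, Jmat G i j = (G.degree i : ℝ) / ((G.degree i : ℝ) + 1) := by
    unfold Jmat
    simp only [Matrix.of_apply]
    rw [← Finset.sum_div]
    congr 1
    rw [SimpleGraph.degree, SimpleGraph.neighborFinset_eq_filter]
    simp [Finset.sum_boole]
  rw [hsum]
  have hpos : (0:ℝ) < (G.degree i : ℝ) + 1 := by positivity
  have hn : (0:ℝ) < n := by
    have := Nat.pos_of_ne_zero (NeZero.ne n); exact_mod_cast this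
  have h1 : (G.degree i : ℝ) / ((G.degree i : ℝ) + 1) = 1 - 1 / ((G.degree i : ℝ) + 1) := by
    field_simp
    ring
  rw [h1]
  have : 1 / (n:ℝ) ≤ 1 / ((G.degree i : ℝ) + 1) := one_div_le_one_div_of_le hpos hd
  linarith

lemma rho_nonneg {n : ℕ} [NeZero n] : (0:ℝ) ≤ 1 - 1 / (n : ℝ) := by
  have hn : (1:ℝ) ≤ n := by exact_mod_cast Nat.one_le_iff_ne_zero.2 (NeZero.ne n)
  have : 1 / (n:ℝ) ≤ 1 := by
    rw [div_le_one (by linarith)]; linarith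
  linarith

lemma mulVec_bound {n : ℕ} [NeZero n] (G : SimpleGraph (Fin n)) [DecidableRel G.Adj]
    {w : Fin n → ℝ} {c : ℝ} (hc : 0 ≤ c) (hw : ∀ j, |w j| ≤ c) (u : Fin n) :
    |(Jmat G).mulVec w u| ≤ (1 - 1 / (n : ℝ)) * c := by
  rw [Matrix.mulVec, dotProduct]
  calc |∑ j, Jmat G u j * w j| ≤ ∑ j, |Jmat G u j * w j| := Finset.abs_sum_le_sum_abs _ _
    _ ≤ ∑ j, Jmat G u j * c := by
        apply Finset.sum_le_sum
        intro j _
        rw [abs_mul, abs_of_nonneg (Jmat_nonneg G u j)]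
        exact mul_le_mul_of_nonneg_left (hw j) (Jmat_nonneg G u j)
    _ = (∑ j, Jmat G u j) * c := by rw [← Finset.sum_mul]
    _ ≤ (1 - 1 / (n : ℝ)) * c := mul_le_mul_of_nonneg_right (Jmat_row_sum G u) hc

lemma ind_bound {n N : ℕ} (Gs : Fin N → SimpleGraph (Fin n)) [∀ i, DecidableRel (Gs i).Adj]
    {s : ℝ} (hs : 0 ≤ s) (a : Fin N) (u : Fin n) [NeZero n] :
    |(if u = 0 then s / (((Gs a).degree 0 : ℝ) + 1) else 0)| ≤ s := by
  have hd : (0:ℝ) < ((Gs a).degree 0 : ℝ) + 1 := by positivity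
  split
  · have habs : |s / (((Gs a).degree 0 : ℝ) + 1)| = s / (((Gs a).degree 0 : ℝ) + 1) :=
      abs_of_nonneg (div_nonneg hs hd.le)
    rw [habs]
    exact div_le_self hs (by nlinarith [show (0:ℝ) ≤ ((Gs a).degree 0 : ℝ) from Nat.cast_nonneg _])
  · rw [abs_zero]; exact hs

lemma traj_bound {N n : ℕ} [NeZero n] (Gs : Fin N → SimpleGraph (Fin n))
    [∀ i, DecidableRel (Gs i).Adj] {s : ℝ} (hs : 0 ≤ s) (σ : ℕ → Fin N) :
    ∀ t u, |traj Gs s σ t u| ≤ s * n := by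
  have hn : (1:ℝ) ≤ n := by exact_mod_cast Nat.one_le_iff_ne_zero.2 (NeZero.ne n)
  have hB : (0:ℝ) ≤ s * n := by positivity
  intro t
  induction t with
  | zero => intro u; simp only [traj, Pi.zero_apply, abs_zero]; exact hB
  | succ t ih =>
    intro u
    show |(Jmat (Gs (σ t))).mulVec (traj Gs s σ t) u + _| ≤ s * n
    calc |(Jmat (Gs (σ t))).mulVec (traj Gs s σ t) u +
          (if u = 0 then s / (((Gs (σ t)).degree 0 : ℝ) + 1) else 0)|
        ≤ |(Jmat (Gs (σ t))).mulVec (traj Gs s σ t) u| +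
          |(if u = 0 then s / (((Gs (σ t)).degree 0 : ℝ) + 1) else 0)| := abs_add_le _ _
      _ ≤ (1 - 1 / (n : ℝ)) * (s * n) + s := by
          gcongr
          · exact mulVec_bound _ hB ih u
          · exact ind_bound Gs hs _ u
      _ = s * n := by
          have hn0 : (n:ℝ) ≠ 0 := by positivity
          field_simp
          ring

lemma traj_shift_diff {N n : ℕ} [NeZero n] (Gs : Fin N → SimpleGraph (Fin n))
    [∀ i, DecidableRel (Gs i).Adj] {s : ℝ} (hs : 0 ≤ s) (σ : ℕ → Fin N) :
    ∀ t u, |traj Gs s σ (t + 1) u - traj Gs s (fun m => σ (m + 1)) t u|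
      ≤ s * (1 - 1 / (n : ℝ)) ^ t := by
  intro t
  induction t with
  | zero =>
    intro u
    show |(Jmat (Gs (σ 0))).mulVec (traj Gs s σ 0) u + _ - 0| ≤ _
    have h0 : traj Gs s σ 0 = 0 := rfl
    rw [h0]
    simp only [Matrix.mulVec_zero, Pi.zero_apply, zero_add, sub_zero, pow_zero, mul_one]
    exact ind_bound Gs hs _ u
  | succ t ih =>
    intro u
    have key : traj Gs s σ (t + 2) u - traj Gs s (fun m => σ (m + 1)) (t + 1) u
        = (Jmat (Gs (σ (t+1)))).mulVec
            (fun v => traj Gs s σ (t + 1) v - traj Gs s (fun m => σ (m + 1)) t v) u := by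
      show (Jmat (Gs (σ (t+1)))).mulVec (traj Gs s σ (t+1)) u + _
          - ((Jmat (Gs (σ (t+1)))).mulVec (traj Gs s (fun m => σ (m+1)) t) u + _) = _
      rw [Matrix.mulVec, Matrix.mulVec, Matrix.mulVec, dotProduct, dotProduct,
        dotProduct]
      have : ∑ j, Jmat (Gs (σ (t+1))) u j *
          (traj Gs s σ (t + 1) j - traj Gs s (fun m => σ (m + 1)) t j)
          = ∑ j, (Jmat (Gs (σ (t+1))) u j * traj Gs s σ (t + 1) j
            - Jmat (Gs (σ (t+1))) u j * traj Gs s (fun m => σ (m + 1)) t j) := by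
        apply Finset.sum_congr rfl; intro j _; ring
      rw [this, Finset.sum_sub_distrib]
      ring
    rw [key]
    have := mulVec_bound (Gs (σ (t+1))) (c := s * (1 - 1 / (n : ℝ)) ^ t)
      (mul_nonneg hs (pow_nonneg rho_nonneg t)) ih u
    calc _ ≤ (1 - 1 / (n : ℝ)) * (s * (1 - 1 / (n : ℝ)) ^ t) := this
      _ = s * (1 - 1 / (n : ℝ)) ^ (t + 1) := by ring

lemma extFun_cons_zero {N k : ℕ} [NeZero N] (a : Fin N) (τ : Fin k → Fin N) :
    extFun (Fin.cons a τ) 0 = a := by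
  unfold extFun
  rw [dif_pos (Nat.succ_pos k)]
  rfl

lemma extFun_cons_tail {N k : ℕ} [NeZero N] (a : Fin N) (τ : Fin k → Fin N) :
    (fun t => extFun (Fin.cons a τ) (t + 1)) = extFun τ := by
  funext t
  unfold extFun
  by_cases h : t < k
  · rw [dif_pos (by omega : t + 1 < k + 1), dif_pos h]
    have : (⟨t + 1, by omega⟩ : Fin (k + 1)) = Fin.succ ⟨t, h⟩ := rfl
    rw [this, Fin.cons_succ]
  · rw [dif_neg (by omega), dif_neg h]

lemma weight_nonneg {N : ℕ} (P : Matrix (Fin N) (Fin N) ℝ) (pi : Fin N → ℝ)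
    (hPpos : ∀ i j, 0 < P i j) (hpipos : ∀ i, 0 < pi i) (k : ℕ) (σ : ℕ → Fin N) :
    0 ≤ weight P pi k σ := by
  unfold weight
  apply mul_nonneg (hpipos _).le
  exact Finset.prod_nonneg fun t _ => (hPpos _ _).le

lemma shift_sum {N : ℕ} [NeZero N] (P : Matrix (Fin N) (Fin N) ℝ) (pi : Fin N → ℝ)
    (hstat : ∀ j, ∑ i, pi i * P i j = pi j) (m : ℕ) (h : (ℕ → Fin N) → ℝ) :
    ∑ σ : Fin (m + 2) → Fin N, weight P pi (m + 2) (extFun σ) * h (fun t => extFun σ (t + 1))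
      = ∑ τ : Fin (m + 1) → Fin N, weight P pi (m + 1) (extFun τ) * h (extFun τ) := by
  rw [← Equiv.sum_comp (Fin.consEquiv (fun _ : Fin (m + 2) => Fin N))
      (fun σ => weight P pi (m + 2) (extFun σ) * h (fun t => extFun σ (t + 1)))]
  rw [Fintype.sum_prod_type, Finset.sum_comm]
  apply Finset.sum_congr rfl
  intro τ _
  have htail : ∀ a : Fin N, (fun t => extFun (Fin.cons a τ) (t + 1)) = extFun τ :=
    fun a => extFun_cons_tail a τ
  have hw : ∀ a : Fin N, weight P pi (m + 2) (extFun (Fin.cons a τ))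
      = pi a * P a (extFun τ 0) * ∏ t ∈ Finset.range m, P (extFun τ t) (extFun τ (t + 1)) := by
    intro a
    have hf : ∀ t, extFun (Fin.cons a τ) (t + 1) = extFun τ t :=
      fun t => congrFun (htail a) t
    unfold weight
    have hm : m + 2 - 1 = m + 1 := rfl
    rw [hm, Finset.prod_range_succ', extFun_cons_zero]
    simp only [hf]
    ring
  calc ∑ a : Fin N, (fun σ => weight P pi (m + 2) (extFun σ) * h (fun t => extFun σ (t + 1)))
          ((Fin.consEquiv (fun _ : Fin (m + 2) => Fin N)) (a, τ))
      = ∑ a : Fin N, pi a * P a (extFun τ 0) *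
          ((∏ t ∈ Finset.range m, P (extFun τ t) (extFun τ (t + 1))) * h (extFun τ)) := by
        apply Finset.sum_congr rfl
        intro a _
        show weight P pi (m + 2) (extFun (Fin.cons a τ)) *
            h (fun t => extFun (Fin.cons a τ) (t + 1)) = _
        rw [hw a, htail a]
        ring
    _ = (∑ a : Fin N, pi a * P a (extFun τ 0)) *
          ((∏ t ∈ Finset.range m, P (extFun τ t) (extFun τ (t + 1))) * h (extFun τ)) := by
        rw [Finset.sum_mul]
    _ = weight P pi (m + 1) (extFun τ) * h (extFun τ) := by
        rw [hstat]
        unfold weight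
        have : m + 1 - 1 = m := rfl
        rw [this]
        ring

lemma weight_sum_one {N : ℕ} [NeZero N] (P : Matrix (Fin N) (Fin N) ℝ) (pi : Fin N → ℝ)
    (hpisum : ∑ i, pi i = 1) (hstat : ∀ j, ∑ i, pi i * P i j = pi j) :
    ∀ k : ℕ, ∑ σ : Fin (k + 1) → Fin N, weight P pi (k + 1) (extFun σ) = 1 := by
  intro k
  induction k with
  | zero =>
    rw [← Equiv.sum_comp (Equiv.funUnique (Fin 1) (Fin N)).symm
        (fun σ : Fin 1 → Fin N => weight P pi 1 (extFun σ))]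
    rw [← hpisum]
    apply Finset.sum_congr rfl
    intro a _
    show weight P pi 1 (extFun (fun _ => a)) = pi a
    unfold weight
    simp [extFun]
  | succ k ih =>
    have := shift_sum P pi hstat k (fun _ => 1)
    simp only [mul_one] at this
    rw [this, ih]

section Main

variable {N n : ℕ} [NeZero N] [NeZero n]
    (Gs : Fin N → SimpleGraph (Fin n)) [∀ i, DecidableRel (Gs i).Adj]
    (P : Matrix (Fin N) (Fin N) ℝ) (pi : Fin N → ℝ) (s : ℝ)

lemma expCorr_apply (k : ℕ) (u v : Fin n) :
    expCorr Gs P pi s k u v = ∑ σ : Fin k → Fin N,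
      weight P pi k (extFun σ) * (traj Gs s (extFun σ) k u * traj Gs s (extFun σ) k v) := by
  unfold expCorr
  rw [Matrix.sum_apply]
  apply Finset.sum_congr rfl
  intro σ _
  rw [Matrix.smul_apply, Matrix.vecMulVec_apply, smul_eq_mul]

lemma expCorr_diff_bound
    (hPpos : ∀ i j, 0 < P i j) (hpipos : ∀ i, 0 < pi i) (hpisum : ∑ i, pi i = 1)
    (hstat : ∀ j, ∑ i, pi i * P i j = pi j) (hs : 0 < s) (k : ℕ) (u v : Fin n) :
    |expCorr Gs P pi s (k + 1) u v - expCorr Gs P pi s k u v|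
      ≤ 2 * (s * n) * (s * n) * (1 - 1 / (n : ℝ)) ^ k := by
  have hB : (0:ℝ) ≤ s * n := by positivity
  have hsn : s ≤ s * n := by
    have hn : (1:ℝ) ≤ n := by exact_mod_cast Nat.one_le_iff_ne_zero.2 (NeZero.ne n)
    nlinarith
  match k with
  | 0 =>
    have h0 : expCorr Gs P pi s 0 u v = 0 := by
      rw [expCorr_apply]
      apply Finset.sum_eq_zero
      intro σ _
      show weight P pi 0 (extFun σ) * (traj Gs s (extFun σ) 0 u * traj Gs s (extFun σ) 0 v) = 0
      have : traj Gs s (extFun σ) 0 u = 0 := rfl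
      rw [this]
      ring
    rw [h0, sub_zero, pow_zero, mul_one, expCorr_apply]
    calc |∑ σ : Fin 1 → Fin N, weight P pi 1 (extFun σ) *
            (traj Gs s (extFun σ) 1 u * traj Gs s (extFun σ) 1 v)|
        ≤ ∑ σ : Fin 1 → Fin N, |weight P pi 1 (extFun σ) *
            (traj Gs s (extFun σ) 1 u * traj Gs s (extFun σ) 1 v)| :=
          Finset.abs_sum_le_sum_abs _ _
      _ ≤ ∑ σ : Fin 1 → Fin N, weight P pi 1 (extFun σ) * ((s * n) * (s * n)) := by
          apply Finset.sum_le_sum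
          intro σ _
          rw [abs_mul, abs_of_nonneg (weight_nonneg P pi hPpos hpipos _ _), abs_mul]
          apply mul_le_mul_of_nonneg_left _ (weight_nonneg P pi hPpos hpipos _ _)
          exact mul_le_mul (traj_bound Gs hs.le _ _ _) (traj_bound Gs hs.le _ _ _)
            (abs_nonneg _) hB
      _ = (s * n) * (s * n) := by
          rw [← Finset.sum_mul, weight_sum_one P pi hpisum hstat 0, one_mul]
      _ ≤ 2 * (s * n) * (s * n) := by nlinarith
  | (m + 1) =>
    have hshift := shift_sum P pi hstat m
      (fun f => traj Gs s f (m + 1) u * traj Gs s f (m + 1) v)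
    rw [expCorr_apply, expCorr_apply, ← hshift, ← Finset.sum_sub_distrib]
    have key : ∀ σ : Fin (m + 2) → Fin N,
        |weight P pi (m + 2) (extFun σ) *
            (traj Gs s (extFun σ) (m + 2) u * traj Gs s (extFun σ) (m + 2) v) -
          weight P pi (m + 2) (extFun σ) *
            (traj Gs s (fun t => extFun σ (t + 1)) (m + 1) u *
              traj Gs s (fun t => extFun σ (t + 1)) (m + 1) v)|
        ≤ weight P pi (m + 2) (extFun σ) *
            (2 * (s * n) * (s * n) * (1 - 1 / (n : ℝ)) ^ (m + 1)) := by
      intro σ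
      set y := traj Gs s (extFun σ) (m + 2)
      set z := traj Gs s (fun t => extFun σ (t + 1)) (m + 1)
      have hyz : ∀ w, |y w - z w| ≤ s * (1 - 1 / (n : ℝ)) ^ (m + 1) :=
        fun w => traj_shift_diff Gs hs.le (extFun σ) (m + 1) w
      have hby : ∀ w, |y w| ≤ s * n := fun w => traj_bound Gs hs.le _ _ w
      have hbz : ∀ w, |z w| ≤ s * n := fun w => traj_bound Gs hs.le _ _ w
      rw [← mul_sub, abs_mul, abs_of_nonneg (weight_nonneg P pi hPpos hpipos _ _)]
      apply mul_le_mul_of_nonneg_left _ (weight_nonneg P pi hPpos hpipos _ _)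
      have hid : y u * y v - z u * z v = y u * (y v - z v) + (y u - z u) * z v := by ring
      rw [hid]
      have hρ : (0:ℝ) ≤ (1 - 1 / (n : ℝ)) ^ (m + 1) := pow_nonneg rho_nonneg _
      calc |y u * (y v - z v) + (y u - z u) * z v|
          ≤ |y u * (y v - z v)| + |(y u - z u) * z v| := abs_add_le _ _
        _ = |y u| * |y v - z v| + |y u - z u| * |z v| := by rw [abs_mul, abs_mul]
        _ ≤ (s * n) * (s * (1 - 1 / (n : ℝ)) ^ (m + 1)) +
            (s * (1 - 1 / (n : ℝ)) ^ (m + 1)) * (s * n) := by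
            apply add_le_add
            · exact mul_le_mul (hby u) (hyz v) (abs_nonneg _) hB
            · exact mul_le_mul (hyz u) (hbz v) (abs_nonneg _) (by positivity)
        _ ≤ 2 * (s * n) * (s * n) * (1 - 1 / (n : ℝ)) ^ (m + 1) := by
            nlinarith [mul_nonneg (mul_nonneg (sub_nonneg.2 hsn) hB) hρ]
    calc |∑ σ : Fin (m + 2) → Fin N, _| ≤ _ := Finset.abs_sum_le_sum_abs _ _
      _ ≤ ∑ σ : Fin (m + 2) → Fin N, weight P pi (m + 2) (extFun σ) *
            (2 * (s * n) * (s * n) * (1 - 1 / (n : ℝ)) ^ (m + 1)) :=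
          Finset.sum_le_sum fun σ _ => key σ
      _ = 2 * (s * n) * (s * n) * (1 - 1 / (n : ℝ)) ^ (m + 1) := by
          rw [← Finset.sum_mul, weight_sum_one P pi hpisum hstat (m + 1), one_mul]

end Main

lemma dot_sum_mulVec {α : Type*} {n : ℕ} (S : Finset α)
    (M : α → Matrix (Fin n) (Fin n) ℝ) (x : Fin n → ℝ) :
    x ⬝ᵥ (∑ σ ∈ S, M σ) *ᵥ x = ∑ σ ∈ S, x ⬝ᵥ (M σ) *ᵥ x := by
  classical
  induction S using Finset.cons_induction with
  | empty => simp
  | cons a S ha ih =>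
    rw [Finset.sum_cons, Finset.sum_cons, Matrix.add_mulVec, dotProduct_add, ih]

lemma quad_term {n : ℕ} (c : ℝ) (y x : Fin n → ℝ) :
    x ⬝ᵥ (c • Matrix.vecMulVec y y) *ᵥ x = c * (y ⬝ᵥ x) ^ 2 := by
  rw [Matrix.smul_mulVec, dotProduct_smul, smul_eq_mul]
  congr 1
  have h1 : Matrix.vecMulVec y y *ᵥ x = (y ⬝ᵥ x) • y := by
    funext u
    simp only [Matrix.mulVec, dotProduct, Matrix.vecMulVec_apply, Pi.smul_apply,
      smul_eq_mul]
    rw [Finset.sum_mul]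
    apply Finset.sum_congr rfl
    intro w _
    ring
  rw [h1, dotProduct_smul, smul_eq_mul, pow_two, dotProduct_comm]

section Main2

variable {N n : ℕ} [NeZero N] [NeZero n]
    (Gs : Fin N → SimpleGraph (Fin n)) [∀ i, DecidableRel (Gs i).Adj]
    (P : Matrix (Fin N) (Fin N) ℝ) (pi : Fin N → ℝ) (s : ℝ)

lemma expCorr_symm_entry (k : ℕ) (u v : Fin n) :
    expCorr Gs P pi s k u v = expCorr Gs P pi s k v u := by
  rw [expCorr_apply, expCorr_apply]
  apply Finset.sum_congr rfl
  intro σ _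
  ring

lemma expCorr_quad_nonneg (hPpos : ∀ i j, 0 < P i j) (hpipos : ∀ i, 0 < pi i)
    (k : ℕ) (x : Fin n → ℝ) :
    0 ≤ x ⬝ᵥ (expCorr Gs P pi s k) *ᵥ x := by
  unfold expCorr
  rw [dot_sum_mulVec]
  apply Finset.sum_nonneg
  intro σ _
  rw [quad_term]
  exact mul_nonneg (weight_nonneg P pi hPpos hpipos _ _) (sq_nonneg _)

theorem expected_dssd_correlation_tendsto'
    (hPpos : ∀ i j, 0 < P i j) (hProw : ∀ i, ∑ j, P i j = 1)
    (hpipos : ∀ i, 0 < pi i) (hpisum : ∑ i, pi i = 1)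
    (hstat : ∀ j, ∑ i, pi i * P i j = pi j)
    (hs : 0 < s) :
    ∃ Q : Matrix (Fin n) (Fin n) ℝ, Q.IsSymm ∧ Q.PosSemidef ∧
      ∀ u v, Tendsto (fun k => expCorr Gs P pi s k u v) atTop (𝓝 (Q u v)) := by
  have hn : (0:ℝ) < n := by
    have := Nat.pos_of_ne_zero (NeZero.ne n); exact_mod_cast this
  have hρ1 : 1 - 1 / (n : ℝ) < 1 := by
    have : 0 < 1 / (n:ℝ) := by positivity
    linarith
  have hcauchy : ∀ u v, CauchySeq (fun k => expCorr Gs P pi s k u v) := by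
    intro u v
    apply cauchySeq_of_le_geometric (1 - 1 / (n : ℝ)) (2 * (s * n) * (s * n)) hρ1
    intro k
    rw [Real.dist_eq, abs_sub_comm]
    exact expCorr_diff_bound Gs P pi s hPpos hpipos hpisum hstat hs k u v
  have hex : ∀ u v, ∃ x, Tendsto (fun k => expCorr Gs P pi s k u v) atTop (𝓝 x) :=
    fun u v => cauchySeq_tendsto_of_complete (hcauchy u v)
  choose Q hQ using hex
  have hsym : ∀ u v, Q v u = Q u v := by
    intro u v
    have heq : (fun k => expCorr Gs P pi s k v u) = fun k => expCorr Gs P pi s k u v :=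
      funext fun k => expCorr_symm_entry Gs P pi s k v u
    have h1 := hQ v u
    rw [heq] at h1
    exact tendsto_nhds_unique h1 (hQ u v)
  refine ⟨Matrix.of Q, ?_, Matrix.posSemidef_iff_dotProduct_mulVec.2 ⟨?_, ?_⟩, fun u v => hQ u v⟩
  · show (Matrix.of Q)ᵀ = Matrix.of Q
    ext u v
    show Q v u = Q u v
    exact hsym u v
  · show (Matrix.of Q)ᴴ = Matrix.of Q
    ext u v
    rw [Matrix.conjTranspose_apply]
    show star (Q v u) = Q u v
    rw [star_trivial]
    exact hsym u v
  · intro x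
    have hT : Tendsto (fun k => x ⬝ᵥ (expCorr Gs P pi s k) *ᵥ x) atTop
        (𝓝 (x ⬝ᵥ (Matrix.of Q) *ᵥ x)) := by
      have hexp : ∀ (M : Matrix (Fin n) (Fin n) ℝ),
          x ⬝ᵥ M *ᵥ x = ∑ u, ∑ v, x u * (M u v * x v) := by
        intro M
        rw [dotProduct]
        apply Finset.sum_congr rfl
        intro u _
        rw [Matrix.mulVec, dotProduct, Finset.mul_sum]
      simp only [hexp]
      apply tendsto_finset_sum
      intro u _
      apply tendsto_finset_sum
      intro v _
      exact tendsto_const_nhds.mul ((hQ u v).mul tendsto_const_nhds)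
    have h0 : ∀ k, 0 ≤ x ⬝ᵥ (expCorr Gs P pi s k) *ᵥ x :=
      fun k => expCorr_quad_nonneg Gs P pi s hPpos hpipos k x
    have hfin := le_of_tendsto_of_tendsto' tendsto_const_nhds hT h0
    have hstar : star x = x := by
      funext u
      exact star_trivial _
    rw [hstar]
    exact hfin

end Main2

/-- For an entrywise positive row-stochastic `P` with stationary distribution `π` and `s > 0`,
the expected correlation matrix `m₂(k)` converges entrywise, as `k → ∞`, to a limit `Q`
which is symmetric and positive semidefinite. -/
theorem expected_dssd_correlation_tendsto {N n : ℕ} [NeZero N] [NeZero n]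
    (Gs : Fin N → SimpleGraph (Fin n)) [∀ i, DecidableRel (Gs i).Adj]
    (P : Matrix (Fin N) (Fin N) ℝ)
    (hPpos : ∀ i j, 0 < P i j) (hProw : ∀ i, ∑ j, P i j = 1)
    (pi : Fin N → ℝ) (hpipos : ∀ i, 0 < pi i) (hpisum : ∑ i, pi i = 1)
    (hstat : ∀ j, ∑ i, pi i * P i j = pi j)
    (s : ℝ) (hs : 0 < s) :
    ∃ Q : Matrix (Fin n) (Fin n) ℝ, Q.IsSymm ∧ Q.PosSemidef ∧
      ∀ u v, Tendsto (fun k => expCorr Gs P pi s k u v) atTop (𝓝 (Q u v)) := by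
  exact expected_dssd_correlation_tendsto' Gs P pi s hPpos hProw hpipos hpisum hstat hs
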